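/- arXiv:2009.05088 — 11 statements merged into one kernel-verified Lean document; each statement's English description precedes it below -/
import Mathlib

section
/- An orthoposet satisfies the condition (x ≤ y implies U(y) = U({x} ∪ L(x',y))) if and only if it satisfies (x ≤ y implies L(x) = L({y} ∪ U(x,y'))). -/
variable {P : Type*}

/-- Lower cone of a set. -/
def lowerCone [Preorder P] (A : Set P) : Set P := {x | ∀ a ∈ A, x ≤ a}

/-- Upper cone of a set. -/
def upperCone [Preorder P] (A : Set P) : Set P := {x | ∀ a ∈ A, a ≤ x}

lemma memL1 [Preorder P] (a z : P) : z ∈ lowerCone {a} ↔ z ≤ a := by simp [lowerCone]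

lemma memU1 [Preorder P] (a z : P) : z ∈ upperCone {a} ↔ a ≤ z := by simp [upperCone]

lemma memL2 [Preorder P] (a b z : P) : z ∈ lowerCone {a, b} ↔ z ≤ a ∧ z ≤ b := by
  simp [lowerCone]

lemma memU2 [Preorder P] (a b z : P) : z ∈ upperCone {a, b} ↔ a ≤ z ∧ b ≤ z := by
  simp [upperCone]

lemma memLU [Preorder P] (a : P) (B : Set P) (z : P) :
    z ∈ lowerCone ({a} ∪ B) ↔ z ≤ a ∧ ∀ b ∈ B, z ≤ b := by simp [lowerCone]

lemma memUU [Preorder P] (a : P) (B : Set P) (z : P) :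
    z ∈ upperCone ({a} ∪ B) ↔ a ≤ z ∧ ∀ b ∈ B, b ≤ z := by simp [upperCone]

/-- In an orthoposet, condition (2) is equivalent to condition (3). -/
theorem cond2_iff_cond3 [PartialOrder P] [BoundedOrder P] (c : P → P)
    (hinv : ∀ x : P, c (c x) = x)
    (hanti : ∀ x y : P, x ≤ y → c y ≤ c x)
    (hcompL : ∀ x : P, lowerCone {x, c x} = {(⊥ : P)})
    (hcompU : ∀ x : P, upperCone {x, c x} = {(⊤ : P)}) :
    (∀ x y : P, x ≤ y → upperCone {y} = upperCone ({x} ∪ lowerCone {c x, y})) ↔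
    (∀ x y : P, x ≤ y → lowerCone {x} = lowerCone ({y} ∪ upperCone {x, c y})) := by
  have liff : ∀ a b : P, a ≤ b ↔ c b ≤ c a := fun a b =>
    ⟨hanti a b, fun h => by have := hanti _ _ h; rwa [hinv, hinv] at this⟩
  constructor
  · intro h2 x y hxy
    have h := h2 (c y) (c x) (hanti x y hxy)
    rw [hinv] at h
    have H : ∀ w : P, c x ≤ w ↔ (c y ≤ w ∧ ∀ v ∈ lowerCone {y, c x}, v ≤ w) := fun w => by
      have := Set.ext_iff.mp h w
      rw [memU1, memUU] at this
      exact this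
    ext z
    rw [memL1, memLU]
    constructor
    · intro hzx
      refine ⟨hzx.trans hxy, fun b hb => ?_⟩
      rw [memU2] at hb
      obtain ⟨hxb, hcyb⟩ := hb
      have h1 : c b ∈ lowerCone {y, c x} := (memL2 _ _ _).mpr
        ⟨by have := hanti _ _ hcyb; rwa [hinv] at this, hanti _ _ hxb⟩
      have := ((H (c z)).mp ((liff z x).mp hzx)).2 (c b) h1
      exact (liff z b).mpr this
    · rintro ⟨hzy, hrest⟩
      have hmain : c x ≤ c z := by
        refine (H (c z)).mpr ⟨(liff z y).mp hzy, fun v hv => ?_⟩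
        rw [memL2] at hv
        obtain ⟨hvy, hvcx⟩ := hv
        have hcv : c v ∈ upperCone {x, c y} := (memU2 _ _ _).mpr
          ⟨by have := (liff v (c x)).mp hvcx; rwa [hinv] at this, hanti _ _ hvy⟩
        have := hrest (c v) hcv
        exact (liff v (c z)).mpr (by rwa [hinv])
      exact (liff z x).mpr hmain
  · intro h3 x y hxy
    have h := h3 (c y) (c x) (hanti x y hxy)
    rw [hinv] at h
    have H : ∀ w : P, w ≤ c y ↔ (w ≤ c x ∧ ∀ v ∈ upperCone {c y, x}, w ≤ v) := fun w => by
      have := Set.ext_iff.mp h w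
      rw [memL1, memLU] at this
      exact this
    ext z
    rw [memU1, memUU]
    constructor
    · intro hyz
      refine ⟨hxy.trans hyz, fun b hb => ?_⟩
      rw [memL2] at hb
      obtain ⟨hbcx, hby⟩ := hb
      have h1 : c b ∈ upperCone {c y, x} := (memU2 _ _ _).mpr
        ⟨hanti _ _ hby, by have := (liff b (c x)).mp hbcx; rwa [hinv] at this⟩
      have := ((H (c z)).mp ((liff y z).mp hyz)).2 (c b) h1
      exact (liff b z).mpr this
    · rintro ⟨hxz, hrest⟩
      have hmain : c z ≤ c y := by
        refine (H (c z)).mpr ⟨(liff x z).mp hxz, fun v hv => ?_⟩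
        rw [memU2] at hv
        obtain ⟨hcyv, hxv⟩ := hv
        have hcv : c v ∈ lowerCone {c x, y} := (memL2 _ _ _).mpr
          ⟨hanti _ _ hxv, by have := hanti _ _ hcyv; rwa [hinv] at this⟩
        have := hrest (c v) hcv
        exact (liff (c z) v).mpr (by rwa [hinv])
      exact (liff y z).mpr hmain
end

section
/- An orthoposet satisfies condition (4) (for all x and B ⊆ P: x ≤ U(B) implies U(B) = U({x} ∪ L(x', U(B)))) if and only if it satisfies condition (5) (for all y and A ⊆ P: L(A) ≤ y implies L(A) = L({y} ∪ U(L(A), y'))). -/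
variable {P : Type*}

section Aux
variable [PartialOrder P] (c : P → P)

lemma upper_image_aux (hinv : ∀ x : P, c (c x) = x)
    (hanti : ∀ x y : P, x ≤ y → c y ≤ c x) (S : Set P) :
    upperCone (c '' S) = c '' lowerCone S := by
  ext z
  constructor
  · intro hz
    refine ⟨c z, fun a ha => ?_, hinv z⟩
    have h := hanti _ _ (hz (c a) ⟨a, ha, rfl⟩)
    rwa [hinv] at h
  · rintro ⟨w, hw, rfl⟩ u ⟨a, ha, rfl⟩
    exact hanti _ _ (hw a ha)

lemma lower_image_aux (hinv : ∀ x : P, c (c x) = x)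
    (hanti : ∀ x y : P, x ≤ y → c y ≤ c x) (S : Set P) :
    lowerCone (c '' S) = c '' upperCone S := by
  ext z
  constructor
  · intro hz
    refine ⟨c z, fun a ha => ?_, hinv z⟩
    have h := hanti _ _ (hz (c a) ⟨a, ha, rfl⟩)
    rwa [hinv] at h
  · rintro ⟨w, hw, rfl⟩ u ⟨a, ha, rfl⟩
    exact hanti _ _ (hw a ha)

end Aux

/-- In an orthoposet, condition (4) is equivalent to condition (5). -/
theorem cond4_iff_cond5 [PartialOrder P] [BoundedOrder P] (c : P → P)
    (hinv : ∀ x : P, c (c x) = x)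
    (hanti : ∀ x y : P, x ≤ y → c y ≤ c x)
    (hcompL : ∀ x : P, lowerCone {x, c x} = {(⊥ : P)})
    (hcompU : ∀ x : P, upperCone {x, c x} = {(⊤ : P)}) :
    (∀ (x : P) (B : Set P), (∀ u ∈ upperCone B, x ≤ u) →
      upperCone B = upperCone ({x} ∪ lowerCone ({c x} ∪ upperCone B))) ↔
    (∀ (y : P) (A : Set P), (∀ a ∈ lowerCone A, a ≤ y) →
      lowerCone A = lowerCone ({y} ∪ upperCone (lowerCone A ∪ {c y}))) := by
  have hinj : Function.Injective (Set.image c) :=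
    Set.image_injective.mpr (Function.Involutive.injective hinv)
  constructor
  · intro h4 y A hA
    have key := h4 (c y) (c '' A) (by
      intro u hu
      have h1 : c u ∈ lowerCone A := by
        intro a ha
        have h := hanti _ _ (hu (c a) ⟨a, ha, rfl⟩)
        rwa [hinv] at h
      have h2 := hanti _ _ (hA (c u) h1)
      rwa [hinv] at h2)
    rw [hinv, upper_image_aux c hinv hanti] at key
    have e1 : ({y} : Set P) ∪ c '' lowerCone A = c '' (lowerCone A ∪ {c y}) := by
      rw [Set.image_union, Set.image_singleton, hinv, Set.union_comm]
    rw [e1, lower_image_aux c hinv hanti] at key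
    have e2 : ({c y} : Set P) ∪ c '' upperCone (lowerCone A ∪ {c y})
        = c '' ({y} ∪ upperCone (lowerCone A ∪ {c y})) := by
      rw [Set.image_union, Set.image_singleton]
    rw [e2, upper_image_aux c hinv hanti] at key
    exact hinj key
  · intro h5 x B hB
    have key := h5 (c x) (c '' B) (by
      intro a ha
      have h1 : c a ∈ upperCone B := by
        intro b hb
        have h := hanti _ _ (ha (c b) ⟨b, hb, rfl⟩)
        rwa [hinv] at h
      have h2 := hanti _ _ (hB (c a) h1)
      rwa [hinv] at h2)
    rw [hinv, lower_image_aux c hinv hanti] at key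
    have e1 : (c '' upperCone B) ∪ ({x} : Set P) = c '' ({c x} ∪ upperCone B) := by
      rw [Set.image_union, Set.image_singleton, hinv, Set.union_comm]
    rw [e1, upper_image_aux c hinv hanti] at key
    have e2 : ({c x} : Set P) ∪ c '' lowerCone ({c x} ∪ upperCone B)
        = c '' ({x} ∪ lowerCone ({c x} ∪ upperCone B)) := by
      rw [Set.image_union, Set.image_singleton]
    rw [e2, lower_image_aux c hinv hanti] at key
    exact hinj key
end

section
/- Let (P,≤,',0,1) be a generalized orthomodular poset and define R(x,y) := L(U(x',y)). Then for all a,b,c: if a' ≤ b and L(a,b) ⊆ L(c), then L(a) ⊆ R(b,c). -/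
variable {P : Type*}

/-- In a generalized orthomodular poset with R(x,y) := LU(x',y):
if a' ≤ b and L(a,b) ⊆ L(d) then L(a) ⊆ R(b,d). -/
theorem gomp_residuation_i [PartialOrder P] [BoundedOrder P] (c : P → P)
    (hinv : ∀ x : P, c (c x) = x)
    (hanti : ∀ x y : P, x ≤ y → c y ≤ c x)
    (hcompL : ∀ x : P, lowerCone {x, c x} = {(⊥ : P)})
    (hcompU : ∀ x : P, upperCone {x, c x} = {(⊤ : P)})
    (homp : ∀ x y : P, x ≤ y → upperCone {y} = upperCone ({x} ∪ lowerCone {c x, y})) :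
    ∀ a b d : P, c a ≤ b → lowerCone {a, b} ⊆ lowerCone {d} →
      lowerCone {a} ⊆ lowerCone (upperCone {c b, d}) := by
  intro a b d hab hLd x hx z hz
  have hxa : x ≤ a := hx a (by simp)
  have hcba : c b ≤ a := by
    have := hanti _ _ hab
    rwa [hinv] at this
  have hU := homp (c b) a hcba
  have hzU : z ∈ upperCone ({c b} ∪ lowerCone {c (c b), a}) := by
    intro w hw
    rcases hw with hw | hw
    · rw [Set.mem_singleton_iff] at hw
      subst hw
      exact hz (c b) (by simp)
    · rw [hinv] at hw
      have hwL : w ∈ lowerCone ({a, b} : Set P) := by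
        intro u hu
        simp only [Set.mem_insert_iff, Set.mem_singleton_iff] at hu
        rcases hu with rfl | rfl
        · exact hw u (by simp)
        · exact hw u (by simp)
      exact (hLd hwL d (by simp)).trans (hz d (by simp))
  have haz : z ∈ upperCone ({a} : Set P) := by rw [hU]; exact hzU
  exact hxa.trans (haz a (by simp))
end

section
/- Let (P,≤,',0,1) be a generalized orthomodular poset and define R(x,y) := L(U(x',y)). Then for all a,b,c: if c ≤ b and L(a) ⊆ R(b,c), then L(a,b) ⊆ L(c). -/
variable {P : Type*}

/-- In a generalized orthomodular poset with R(x,y) := LU(x',y):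
if d ≤ b and L(a) ⊆ R(b,d) then L(a,b) ⊆ L(d). -/
theorem gomp_residuation_ii [PartialOrder P] [BoundedOrder P] (c : P → P)
    (hinv : ∀ x : P, c (c x) = x)
    (hanti : ∀ x y : P, x ≤ y → c y ≤ c x)
    (hcompL : ∀ x : P, lowerCone {x, c x} = {(⊥ : P)})
    (hcompU : ∀ x : P, upperCone {x, c x} = {(⊤ : P)})
    (homp : ∀ x y : P, x ≤ y → upperCone {y} = upperCone ({x} ∪ lowerCone {c x, y})) :
    ∀ a b d : P, d ≤ b → lowerCone {a} ⊆ lowerCone (upperCone {c b, d}) →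
      lowerCone {a, b} ⊆ lowerCone {d} := by
  intro a b d hdb hsub z hz
  have hza : z ≤ a := hz a (Set.mem_insert _ _)
  have hzb : z ≤ b := hz b (Set.mem_insert_of_mem _ rfl)
  have hzR : ∀ w, c b ≤ w → d ≤ w → z ≤ w := by
    intro w h1 h2
    have hzLa : z ∈ lowerCone ({a} : Set P) := by
      intro t ht
      rcases ht with rfl
      exact hza
    refine hsub hzLa w ?_
    intro t ht
    rcases ht with rfl | ht
    · exact h1
    · rcases ht with rfl
      exact h2
  have hcb : c b ≤ c d := hanti _ _ hdb
  have heq := homp (c b) (c d) hcb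
  have hcz : c z ∈ upperCone ({c b} ∪ lowerCone {c (c b), c d}) := by
    intro t ht
    rcases ht with rfl | ht
    · exact hanti _ _ hzb
    · have htb : t ≤ b := by
        have := ht (c (c b)) (Set.mem_insert _ _)
        rwa [hinv] at this
      have htcd : t ≤ c d := ht (c d) (Set.mem_insert_of_mem _ rfl)
      have hdct : d ≤ c t := by
        have := hanti _ _ htcd
        rwa [hinv] at this
      have hzct : z ≤ c t := hzR (c t) (hanti _ _ htb) hdct
      have := hanti _ _ hzct
      rwa [hinv] at this
  rw [← heq] at hcz
  have hcdcz : c d ≤ c z := hcz (c d) rfl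
  have hzd : z ≤ d := by
    have := hanti _ _ hcdcz
    rwa [hinv, hinv] at this
  intro t ht
  rcases ht with rfl
  exact hzd
end

section
/- Let (P,≤,',0,1) be a generalized orthomodular poset and define R(x,y) := L(U(x',y)). Then R satisfies operator divisibility: x ≤ y implies L({y} ∪ U(R(y,x))) = L(x). -/
variable {P : Type*}

lemma ulu_eq [Preorder P] (S : Set P) :
    upperCone (lowerCone (upperCone S)) = upperCone S := by
  apply Set.eq_of_subset_of_subset
  · intro u hu a ha
    exact hu a (fun b hb => hb a ha)
  · intro u hu w hw
    exact hw u hu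

/-- In a generalized orthomodular poset, R(x,y) := LU(x',y) satisfies
operator divisibility: x ≤ y implies L({y} ∪ U(R(y,x))) = L(x). -/
theorem gomp_operator_divisibility [PartialOrder P] [BoundedOrder P] (c : P → P)
    (hinv : ∀ x : P, c (c x) = x)
    (hanti : ∀ x y : P, x ≤ y → c y ≤ c x)
    (hcompL : ∀ x : P, lowerCone {x, c x} = {(⊥ : P)})
    (hcompU : ∀ x : P, upperCone {x, c x} = {(⊤ : P)})
    (homp : ∀ x y : P, x ≤ y → upperCone {y} = upperCone ({x} ∪ lowerCone {c x, y})) :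
    ∀ x y : P, x ≤ y →
      lowerCone ({y} ∪ upperCone (lowerCone (upperCone {c y, x}))) = lowerCone {x} := by
  intro x y hxy
  have hle : ∀ a b : P, a ≤ b ↔ c b ≤ c a := by
    intro a b
    constructor
    · exact hanti a b
    · intro h
      have := hanti _ _ h
      rwa [hinv, hinv] at this
  rw [ulu_eq]
  have h := homp (c y) (c x) (hanti x y hxy)
  rw [hinv] at h
  ext z
  constructor
  · intro hz
    have hzy : z ≤ y := hz y (Or.inl rfl)
    have hzU : ∀ u ∈ upperCone ({c y, x} : Set P), z ≤ u := fun u hu => hz u (Or.inr hu)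
    have hmem : c z ∈ upperCone ({c y} ∪ lowerCone {y, c x}) := by
      rintro a (ha | ha)
      · rw [Set.mem_singleton_iff] at ha
        subst ha
        exact (hle z y).mp hzy
      · have hay : a ≤ y := ha y (Or.inl rfl)
        have hacx : a ≤ c x := ha (c x) (Or.inr rfl)
        have hca : c a ∈ upperCone ({c y, x} : Set P) := by
          intro b hb
          rcases hb with hb | hb
          · subst hb
            exact (hle a y).mp hay
          · have hb' : b = x := hb
            rw [hb']
            have := (hle a (c x)).mp hacx
            rwa [hinv] at this
        have := (hle z (c a)).mp (hzU _ hca)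
        rwa [hinv] at this
    rw [← h] at hmem
    have hcxcz : c x ≤ c z := hmem (c x) rfl
    intro a ha
    have ha' : a = x := ha
    rw [ha']
    exact (hle z x).mpr hcxcz
  · intro hz
    have hzx : z ≤ x := hz x rfl
    rintro a (ha | ha)
    · rw [Set.mem_singleton_iff] at ha
      subst ha
      exact hzx.trans hxy
    · exact hzx.trans (ha x (Or.inr rfl))
end

section
/- Let (P,≤,',R,0,1) be a conditionally operator residuated poset with R(x,y) = L(U(x',y)) for all x,y. Then ' is an involution on P (x'' = x for all x) and a complementation (L(x,x')={0} and U(x,x')={1}). -/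
variable {P : Type*}

/-- In a conditionally operator residuated poset with R(x,y) = LU(x',y),
the unary operation is an involution and a complementation. -/
theorem cond_op_residuated_involution_complementation
    [PartialOrder P] [BoundedOrder P] (c : P → P) (R : P → P → Set P)
    (hanti : ∀ x y : P, x ≤ y → c y ≤ c x)
    (hi : ∀ x y z : P, c x ≤ y → lowerCone {x, y} ⊆ lowerCone {z} →
      lowerCone {x} ⊆ R y z)
    (hii : ∀ x y z : P, z ≤ y → lowerCone {x} ⊆ R y z →
      lowerCone {x, y} ⊆ lowerCone {z})
    (hiii : ∀ x : P, R x ⊥ = lowerCone {c x})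
    (hiv : ∀ x : P, R (c (c x)) x = (Set.univ : Set P))
    (hR : ∀ x y : P, R x y = lowerCone (upperCone {c x, y})) :
    ∀ x : P, c (c x) = x ∧
      lowerCone {x, c x} = {(⊥ : P)} ∧
      upperCone {x, c x} = {(⊤ : P)} := by
  -- any common lower bound of x and c x is ⊥
  have Lcomp : ∀ x b : P, b ≤ x → b ≤ c x → b = ⊥ := by
    intro x b hbx hbcx
    have h := hii b x ⊥ bot_le (by
      rw [hiii]
      intro a ha
      have : a ≤ b := ha b rfl
      intro t ht
      rw [Set.mem_singleton_iff] at ht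
      subst ht
      exact le_trans this hbcx)
    have hb : b ∈ lowerCone ({b, x} : Set P) := by
      intro t ht
      rcases ht with h1 | h1
      · subst h1; exact le_rfl
      · rw [Set.mem_singleton_iff] at h1; subst h1; exact hbx
    have := h hb ⊥ (Set.mem_singleton ⊥)
    exact le_antisymm this bot_le
  -- x ≤ c (c x)
  have le_cc : ∀ x : P, x ≤ c (c x) := by
    intro x
    have h := hi x (c x) ⊥ (le_refl (c x)) (by
      intro a ha t ht
      rw [Set.mem_singleton_iff] at ht; subst ht
      have h1 : a ≤ x := ha x (Set.mem_insert x _)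
      have h2 : a ≤ c x := ha (c x) (Set.mem_insert_iff.mpr (Or.inr rfl))
      exact le_of_eq (Lcomp x a h1 h2))
    have hx : x ∈ lowerCone ({x} : Set P) := by
      intro t ht
      rw [Set.mem_singleton_iff] at ht; subst ht; exact le_rfl
    have := h hx
    rw [hiii] at this
    exact this (c (c x)) (Set.mem_singleton _)
  have c3 : ∀ x : P, c (c (c x)) = c x := fun x =>
    le_antisymm (hanti _ _ (le_cc x)) (le_cc (c x))
  -- any common upper bound of x and c x is ⊤
  have Ucomp : ∀ x u : P, x ≤ u → c x ≤ u → u = ⊤ := by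
    intro x u hxu hcxu
    have h := hiv x
    rw [hR] at h
    have htop : (⊤ : P) ∈ lowerCone (upperCone ({c (c (c x)), x} : Set P)) := by
      rw [h]; trivial
    have hu : u ∈ upperCone ({c (c (c x)), x} : Set P) := by
      intro t ht
      rcases ht with h1 | h1
      · subst h1; rw [c3]; exact hcxu
      · rw [Set.mem_singleton_iff] at h1; subst h1; exact hxu
    exact le_antisymm le_top (htop u hu)
  -- c (c x) ≤ x
  have cc_le : ∀ x : P, c (c x) ≤ x := by
    intro x
    have h := hii (c (c x)) (c (c x)) x (le_cc x) (by
      rw [hR]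
      intro a _ u hu
      have h1 : c (c (c x)) ≤ u := hu _ (Set.mem_insert _ _)
      have h2 : x ≤ u := hu x (Set.mem_insert_iff.mpr (Or.inr rfl))
      rw [c3 x] at h1
      have := Ucomp x u h2 h1
      subst this
      exact le_top)
    have hx : c (c x) ∈ lowerCone ({c (c x), c (c x)} : Set P) := by
      intro t ht
      rcases ht with h1 | h1
      · subst h1; exact le_rfl
      · rw [Set.mem_singleton_iff] at h1; subst h1; exact le_rfl
    exact h hx x (Set.mem_singleton x)
  intro x
  refine ⟨le_antisymm (cc_le x) (le_cc x), ?_, ?_⟩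
  · ext b
    constructor
    · intro hb
      have h1 : b ≤ x := hb x (Set.mem_insert x _)
      have h2 : b ≤ c x := hb (c x) (Set.mem_insert_iff.mpr (Or.inr rfl))
      exact Lcomp x b h1 h2
    · intro hb
      rw [Set.mem_singleton_iff] at hb; subst hb
      intro t _; exact bot_le
  · ext u
    constructor
    · intro hu
      have h1 : x ≤ u := hu x (Set.mem_insert x _)
      have h2 : c x ≤ u := hu (c x) (Set.mem_insert_iff.mpr (Or.inr rfl))
      exact Ucomp x u h1 h2
    · intro hu
      rw [Set.mem_singleton_iff] at hu; subst hu
      intro t _; exact le_top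
end

section
/- Let (P,≤,',R,0,1) be a conditionally operator residuated poset satisfying operator divisibility, with R(x,y) = L(U(x',y)) for all x,y. Then (P,≤,',0,1) is a generalized orthomodular poset. -/
variable {P : Type*}

lemma mem_lowerCone [Preorder P] {A : Set P} {x : P} :
    x ∈ lowerCone A ↔ ∀ a ∈ A, x ≤ a := Iff.rfl

lemma mem_upperCone [Preorder P] {A : Set P} {x : P} :
    x ∈ upperCone A ↔ ∀ a ∈ A, a ≤ x := Iff.rfl

lemma upper_lower_upper [Preorder P] (A : Set P) :
    upperCone (lowerCone (upperCone A)) = upperCone A := by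
  ext u
  constructor
  · intro hu a ha
    exact hu a (fun b hb => hb a ha)
  · intro hu t ht
    exact ht u hu

lemma upperCone_lowerCone_singleton [Preorder P] (a : P) :
    upperCone (lowerCone ({a} : Set P)) = upperCone {a} := by
  ext u
  constructor
  · intro hu
    intro b hb
    rw [Set.mem_singleton_iff] at hb
    subst hb
    exact hu b (fun z hz => le_of_eq (Set.mem_singleton_iff.mp hz).symm)
  · intro hu t ht
    exact (ht a rfl).trans (hu a rfl)

/-- A conditionally operator residuated poset satisfying operator divisibility
with R(x,y) = LU(x',y) is a generalized orthomodular poset. -/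
theorem cond_op_residuated_is_gomp
    [PartialOrder P] [BoundedOrder P] (c : P → P) (R : P → P → Set P)
    (hanti : ∀ x y : P, x ≤ y → c y ≤ c x)
    (hi : ∀ x y z : P, c x ≤ y → lowerCone {x, y} ⊆ lowerCone {z} →
      lowerCone {x} ⊆ R y z)
    (hii : ∀ x y z : P, z ≤ y → lowerCone {x} ⊆ R y z →
      lowerCone {x, y} ⊆ lowerCone {z})
    (hiii : ∀ x : P, R x ⊥ = lowerCone {c x})
    (hiv : ∀ x : P, R (c (c x)) x = (Set.univ : Set P))
    (hdiv : ∀ x y : P, x ≤ y → lowerCone ({y} ∪ upperCone (R y x)) = lowerCone {x})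
    (hR : ∀ x y : P, R x y = lowerCone (upperCone {c x, y})) :
    (∀ x : P, c (c x) = x) ∧
    (∀ x : P, lowerCone {x, c x} = {(⊥ : P)}) ∧
    (∀ x : P, upperCone {x, c x} = {(⊤ : P)}) ∧
    (∀ x y : P, x ≤ y → upperCone {y} = upperCone ({x} ∪ lowerCone {c x, y})) := by
  -- Step 1: L{y, c y} = {⊥}
  have key2 : ∀ y : P, lowerCone {y, c y} = {(⊥ : P)} := by
    intro y
    have h := hdiv ⊥ y bot_le
    rw [hiii, upperCone_lowerCone_singleton] at h
    ext t
    constructor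
    · intro ht
      have : t ∈ lowerCone ({y} ∪ upperCone ({c y} : Set P)) := by
        intro a ha
        rcases ha with ha | ha
        · rw [Set.mem_singleton_iff] at ha
          subst ha
          exact ht a (Or.inl rfl)
        · exact (ht (c y) (Or.inr rfl)).trans (ha (c y) rfl)
      rw [h] at this
      exact Set.mem_singleton_iff.mpr (le_antisymm (this ⊥ rfl) bot_le)
    · intro ht
      rw [Set.mem_singleton_iff] at ht
      subst ht
      intro a _
      exact bot_le
  -- Step 2: x ≤ c (c x)
  have hle : ∀ x : P, x ≤ c (c x) := by
    intro x
    have h1 : lowerCone ({x, c x} : Set P) ⊆ lowerCone {⊥} := by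
      rw [key2 x]
      intro t ht
      rw [Set.mem_singleton_iff] at ht
      subst ht
      intro a ha
      exact bot_le
    have h2 := hi x (c x) ⊥ le_rfl h1
    rw [hiii] at h2
    exact h2 (fun a ha => le_of_eq (Set.mem_singleton_iff.mp ha).symm) (c (c x)) rfl
  -- Step 3: involution
  have inv : ∀ x : P, c (c x) = x := by
    intro x
    refine le_antisymm ?_ (hle x)
    have h := hdiv x (c (c x)) (hle x)
    rw [hiv] at h
    have : c (c x) ∈ lowerCone ({c (c x)} ∪ upperCone (Set.univ : Set P)) := by
      intro a ha
      rcases ha with ha | ha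
      · exact le_of_eq (Set.mem_singleton_iff.mp ha).symm
      · exact ha (c (c x)) trivial
    rw [h] at this
    exact this x rfl
  -- Step 4: U{x, c x} = {⊤}
  have key3 : ∀ x : P, upperCone {x, c x} = {(⊤ : P)} := by
    intro x
    have h := hiv x
    rw [hR, inv (c x)] at h
    ext u
    constructor
    · intro hu
      have htop : (⊤ : P) ∈ lowerCone (upperCone ({c x, x} : Set P)) := by
        rw [h]; trivial
      have : u ∈ upperCone ({c x, x} : Set P) := by
        intro a ha
        rcases ha with ha | ha
        · subst ha; exact hu (c x) (Or.inr rfl)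
        · exact hu a (Or.inl ha)
      exact Set.mem_singleton_iff.mpr (le_antisymm le_top (htop u this))
    · intro hu
      rw [Set.mem_singleton_iff] at hu
      subst hu
      intro a _
      exact le_top
  refine ⟨inv, key2, key3, ?_⟩
  -- Step 5: GOMP condition
  intro x y hxy
  have h := hdiv (c y) (c x) (hanti x y hxy)
  rw [hR, inv x, upper_lower_upper] at h
  ext u
  constructor
  · intro hu a ha
    rcases ha with ha | ha
    · exact (Set.mem_singleton_iff.mp ha ▸ hxy).trans (hu y rfl)
    · exact (ha y (Or.inr rfl)).trans (hu y rfl)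
  · intro hu
    have hcu : c u ∈ lowerCone ({c x} ∪ upperCone ({x, c y} : Set P)) := by
      intro a ha
      rcases ha with ha | ha
      · rw [Set.mem_singleton_iff] at ha
        subst ha
        exact hanti _ _ (hu x (Or.inl rfl))
      · -- a ∈ U{x, c y}; show c u ≤ a
        have hca : c a ∈ lowerCone ({c x, y} : Set P) := by
          intro b hb
          rcases hb with hb | hb
          · subst hb
            exact hanti _ _ (ha x (Or.inl rfl))
          · rw [Set.mem_singleton_iff] at hb
            have h2 := hanti _ _ (ha (c y) (Or.inr rfl))
            rw [inv y] at h2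
            rw [hb]
            exact h2
        have := hanti _ _ (hu (c a) (Or.inr hca))
        rwa [inv a] at this
    rw [h] at hcu
    have := hanti _ _ (hcu (c y) rfl)
    rw [inv y, inv u] at this
    intro a ha
    rw [Set.mem_singleton_iff] at ha
    subst ha
    exact this
end

section
/- Let (P,≤,',0,1) be a strong generalized orthomodular poset, and define M(x,y) := L(U(x,y') ∪ {y}) and R(x,y) := L(U({x'} ∪ L(x,y))). Then operator adjointness holds: M(x,y) ⊆ L(z) if and only if L(x) ⊆ R(y,z). -/
variable {P : Type*}

/-- In a strong generalized orthomodular poset, with M(x,y) := L(U(x,y') ∪ {y})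
and R(x,y) := L(U({x'} ∪ L(x,y))), operator adjointness holds. -/
theorem strong_gomp_operator_adjointness
    [PartialOrder P] [BoundedOrder P] (c : P → P)
    (hinv : ∀ x : P, c (c x) = x)
    (hanti : ∀ x y : P, x ≤ y → c y ≤ c x)
    (hcompL : ∀ x : P, lowerCone {x, c x} = {(⊥ : P)})
    (hcompU : ∀ x : P, upperCone {x, c x} = {(⊤ : P)})
    (hstrong : ∀ (x : P) (B : Set P), (∀ u ∈ upperCone B, x ≤ u) →
      upperCone B = upperCone ({x} ∪ lowerCone ({c x} ∪ upperCone B))) :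
    ∀ x y z : P,
      lowerCone (upperCone {x, c y} ∪ {y}) ⊆ lowerCone {z} ↔
      lowerCone {x} ⊆ lowerCone (upperCone ({c y} ∪ lowerCone {y, z})) := by
  intro x y z
  have hkey := hstrong (c y) {x, c y} (fun u hu => hu (c y) (Or.inr rfl))
  rw [hinv y] at hkey
  constructor
  · -- forward direction
    intro H t ht u hu
    have htx : t ≤ x := ht x rfl
    have hux : x ≤ u := by
      have hu' : u ∈ upperCone {x, c y} := by
        rw [hkey]
        rintro a (rfl | ha)
        · exact hu (c y) (Or.inl rfl)
        · -- ha : a ∈ lowerCone ({y} ∪ upperCone {x, c y})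
          have hay : a ≤ y := ha y (Or.inl rfl)
          have haz : a ≤ z := by
            have hmem : a ∈ lowerCone (upperCone {x, c y} ∪ {y}) := by
              rintro b (hb | rfl)
              · exact ha b (Or.inr hb)
              · exact hay
            exact H hmem z rfl
          refine hu a (Or.inr ?_)
          rintro b (rfl | rfl)
          · exact hay
          · exact haz
      exact hu' x (Or.inl rfl)
    exact le_trans htx hux
  · -- backward direction
    intro H m hm b hb
    have hmy : m ≤ y := hm y (Or.inr rfl)
    have hmU : ∀ v ∈ upperCone {x, c y}, m ≤ v := fun v hv => hm v (Or.inl hv)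
    have hx : x ∈ lowerCone (upperCone ({c y} ∪ lowerCone {y, z})) := by
      refine H ?_
      intro a ha
      rw [ha]
    -- every element of U({c y} ∪ L{y,z}) is above m
    have hmB : ∀ u ∈ upperCone ({c y} ∪ lowerCone {y, z}), m ≤ u := by
      intro u huB
      refine hmU u ?_
      rintro a (rfl | rfl)
      · exact hx u huB
      · exact huB (c y) (Or.inl rfl)
    -- dual orthomodular law via hstrong with B = {c y, c z}
    have hkey2 := hstrong (c y) {c y, c z} (fun u hu => hu (c y) (Or.inl rfl))
    rw [hinv y] at hkey2
    have hcmem : c m ∈ upperCone {c y, c z} := by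
      rw [hkey2]
      rintro a (rfl | ha)
      · exact hanti m y hmy
      · -- ha : a ∈ lowerCone ({y} ∪ upperCone {c y, c z}); show a ≤ c m
        have hay : a ≤ y := ha y (Or.inl rfl)
        have hcaB : c a ∈ upperCone ({c y} ∪ lowerCone {y, z}) := by
          rintro t (rfl | ht)
          · exact hanti a y hay
          · -- ht : t ∈ lowerCone {y, z}; show t ≤ c a
            have hty : t ≤ y := ht y (Or.inl rfl)
            have htz : t ≤ z := ht z (Or.inr rfl)
            have hact : a ≤ c t := by
              refine ha (c t) (Or.inr ?_)
              rintro s (rfl | rfl)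
              · exact hanti t y hty
              · exact hanti t z htz
            have := hanti a (c t) hact
            rw [hinv t] at this
            exact le_trans (le_refl t) (le_trans this (le_refl (c a)))
        have hmca : m ≤ c a := hmB (c a) hcaB
        have := hanti m (c a) hmca
        rw [hinv a] at this
        exact this
    have hczcm : c z ≤ c m := hcmem (c z) (Or.inr rfl)
    have hmz : m ≤ z := by
      have := hanti (c z) (c m) hczcm
      rw [hinv z, hinv m] at this
      exact this
    rw [hb]
    exact hmz
end

section
/- Let (P,≤,',0,1) be a strong generalized orthomodular poset with R(x,y) := L(U({x'} ∪ L(x,y))). Then R(x,0) = L(x'), R(x,x'') = R(x'',x) = P, and operator divisibility holds: x ≤ y implies L({y} ∪ U(R(y,x))) = L(x). -/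
variable {P : Type*}

/-- The operator R(x,y) := L(U({x'} ∪ L(x,y))) on a strong generalized
orthomodular poset. -/
def Rop [Preorder P] (c : P → P) (x y : P) : Set P :=
  lowerCone (upperCone ({c x} ∪ lowerCone {x, y}))

/-- In a strong generalized orthomodular poset, R satisfies R(x,0)=L(x'),
R(x,x'')=R(x'',x)=P and operator divisibility. -/
theorem strong_gomp_R_properties
    [PartialOrder P] [BoundedOrder P] (c : P → P)
    (hinv : ∀ x : P, c (c x) = x)
    (hanti : ∀ x y : P, x ≤ y → c y ≤ c x)
    (hcompL : ∀ x : P, lowerCone {x, c x} = {(⊥ : P)})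
    (hcompU : ∀ x : P, upperCone {x, c x} = {(⊤ : P)})
    (hstrong : ∀ (x : P) (B : Set P), (∀ u ∈ upperCone B, x ≤ u) →
      upperCone B = upperCone ({x} ∪ lowerCone ({c x} ∪ upperCone B))) :
    (∀ x : P, Rop c x ⊥ = lowerCone {c x}) ∧
    (∀ x : P, Rop c x (c (c x)) = (Set.univ : Set P)) ∧
    (∀ x : P, Rop c (c (c x)) x = (Set.univ : Set P)) ∧
    (∀ x y : P, x ≤ y →
      lowerCone ({y} ∪ upperCone (Rop c y x)) = lowerCone {x}) := by
  refine ⟨?_, ?_, ?_, ?_⟩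
  · -- R(x,⊥) = L(x')
    intro x
    ext z
    constructor
    · intro hz
      intro a ha
      have ha' : a = c x := ha
      subst ha'
      -- c x is an upper bound of {c x} ∪ L{x,⊥}
      refine hz (c x) ?_
      intro b hb
      rcases hb with hb | hb
      · exact le_of_eq hb
      · have hb0 : b ≤ (⊥ : P) := hb ⊥ (Or.inr rfl)
        exact le_trans hb0 bot_le
    · intro hz u hu
      have hzc : z ≤ c x := hz (c x) rfl
      exact le_trans hzc (hu (c x) (Or.inl rfl))
  · -- R(x, x'') = univ
    intro x
    ext z
    simp only [Set.mem_univ, iff_true]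
    intro u hu
    have hu1 : c x ≤ u := hu (c x) (Or.inl rfl)
    have hx : x ∈ lowerCone ({x, c (c x)} : Set P) := by
      intro a ha
      rcases ha with ha | ha
      · exact le_of_eq ha.symm
      · rw [ha, hinv]
    have hu2 : x ≤ u := hu x (Or.inr hx)
    have : u ∈ upperCone ({x, c x} : Set P) := by
      intro a ha
      rcases ha with ha | ha
      · rw [ha]; exact hu2
      · rw [ha]; exact hu1
    rw [hcompU x] at this
    have : u = ⊤ := this
    rw [this]
    exact le_top
  · -- R(x'', x) = univ
    intro x
    ext z
    simp only [Set.mem_univ, iff_true]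
    intro u hu
    have hu1 : c (c (c x)) ≤ u := hu (c (c (c x))) (Or.inl rfl)
    rw [hinv] at hu1
    have hx : x ∈ lowerCone ({c (c x), x} : Set P) := by
      intro a ha
      rcases ha with ha | ha
      · rw [ha, hinv]
      · exact le_of_eq ha.symm
    have hu2 : x ≤ u := hu x (Or.inr hx)
    have : u ∈ upperCone ({x, c x} : Set P) := by
      intro a ha
      rcases ha with ha | ha
      · rw [ha]; exact hu2
      · rw [ha]; exact hu1
    rw [hcompU x] at this
    have : u = ⊤ := this
    rw [this]
    exact le_top
  · -- divisibility
    intro x y hxy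
    ext z
    constructor
    · intro hz
      intro a ha
      rw [show a = x from ha]
      have hzy : z ≤ y := hz y (Or.inl rfl)
      -- z ≤ every common upper bound of x and c y
      have hS : ∀ u : P, c y ≤ u → x ≤ u → z ≤ u := by
        intro u hcy hxu
        refine hz u (Or.inr ?_)
        -- u ∈ U(Rop c y x): u is an upper bound of L(U({c y} ∪ L{y,x}))
        intro s hs
        refine hs u ?_
        intro b hb
        rcases hb with hb | hb
        · rw [hb]; exact hcy
        · exact le_trans (hb x (Or.inr rfl)) hxu
      -- apply hstrong with element (c y), B = {c x}
      have hhyp : ∀ u ∈ upperCone ({c x} : Set P), c y ≤ u := by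
        intro u hu
        exact le_trans (hanti x y hxy) (hu (c x) rfl)
      have hkey := hstrong (c y) {c x} hhyp
      -- show c z ∈ RHS, conclude c x ≤ c z
      have hcz : c z ∈ upperCone ({c y} ∪ lowerCone ({c (c y)} ∪ upperCone ({c x} : Set P))) := by
        intro b hb
        rcases hb with hb | hb
        · rw [hb]; exact hanti z y hzy
        · -- b ≤ c(c y) = y and b ≤ c x, show b ≤ c z
          have hby : b ≤ y := by
            have := hb (c (c y)) (Or.inl rfl)
            rwa [hinv] at this
          have hbcx : b ≤ c x := hb (c x) (Or.inr fun a ha => le_of_eq ha)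
          -- z ≤ c b since c y ≤ c b and x ≤ c b
          have hzb : z ≤ c b := by
            refine hS (c b) (hanti b y hby) ?_
            have := hanti b (c x) hbcx
            rwa [hinv] at this
          have := hanti z (c b) hzb
          rwa [hinv] at this
      rw [← hkey] at hcz
      have hcxcz : c x ≤ c z := hcz (c x) rfl
      have := hanti (c x) (c z) hcxcz
      rwa [hinv, hinv] at this
    · intro hz b hb
      have hzx : z ≤ x := hz x rfl
      rcases hb with hb | hb
      · rw [hb]; exact le_trans hzx hxy
      · -- b ∈ U(Rop c y x); z ∈ Rop c y x since z ≤ x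
        refine hb z ?_
        intro u hu
        have hxu : x ≤ u := hu x (Or.inr (by
          intro a ha
          rcases ha with ha | ha
          · rw [ha]; exact hxy
          · exact le_of_eq ha.symm))
        exact le_trans hzx hxu
end

section
/- Let (P,≤,',0,1) be a generalized orthomodular poset with an assigned directoid (P,⊔,',0,1), and define x ⊓ y := (x' ⊔ y')'. Then for all a,b: L(a,b) = {(a⊓x)⊓(b⊓x) : x ∈ P} = {x ∈ P : (a⊓x)⊓(b⊓x) = x}. -/
variable {P : Type*}

/-- The derived meet operation x ⊓ y := (x' ⊔ y')'. -/
def dinf (c : P → P) (sup : P → P → P) (x y : P) : P := c (sup (c x) (c y))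

/-- In a generalized orthomodular poset with an assigned directoid,
L(a,b) = {(a⊓x)⊓(b⊓x) : x ∈ P} = {x : (a⊓x)⊓(b⊓x) = x}. -/
theorem gomp_lowerCone_via_directoid
    [PartialOrder P] [BoundedOrder P] (c : P → P) (sup : P → P → P)
    (hinv : ∀ x : P, c (c x) = x)
    (hanti : ∀ x y : P, x ≤ y → c y ≤ c x)
    (hcompL : ∀ x : P, lowerCone {x, c x} = {(⊥ : P)})
    (hcompU : ∀ x : P, upperCone {x, c x} = {(⊤ : P)})
    (homp : ∀ x y : P, x ≤ y → upperCone {y} = upperCone ({x} ∪ lowerCone {c x, y}))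
    (hs1 : ∀ x y : P, x ≤ y → sup x y = y)
    (hs2 : ∀ x y : P, sup x y = sup y x)
    (hs3 : ∀ x y : P, sup x y ∈ upperCone {x, y}) :
    ∀ a b : P,
      lowerCone {a, b} =
        {z | ∃ x : P, dinf c sup (dinf c sup a x) (dinf c sup b x) = z} ∧
      lowerCone {a, b} =
        {x | dinf c sup (dinf c sup a x) (dinf c sup b x) = x} := by

  intro a b
  have hle_l : ∀ u v : P, dinf c sup u v ≤ u := by
    intro u v
    have h1 : c u ≤ sup (c u) (c v) := (hs3 (c u) (c v)) (c u) (by simp)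
    have := hanti _ _ h1
    rwa [hinv] at this
  have hle_r : ∀ u v : P, dinf c sup u v ≤ v := by
    intro u v
    have h1 : c v ≤ sup (c u) (c v) := (hs3 (c u) (c v)) (c v) (by simp)
    have := hanti _ _ h1
    rwa [hinv] at this
  have hfix : ∀ u v : P, v ≤ u → dinf c sup u v = v := by
    intro u v huv
    unfold dinf
    rw [hs1 _ _ (hanti _ _ huv), hinv]
  have key : ∀ x, x ∈ lowerCone {a, b} →
      dinf c sup (dinf c sup a x) (dinf c sup b x) = x := by
    intro x hx
    have ha : x ≤ a := hx a (by simp)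
    have hb : x ≤ b := hx b (by simp)
    rw [hfix a x ha, hfix b x hb, hfix x x le_rfl]
  constructor
  · ext z
    constructor
    · intro hz
      exact ⟨z, key z hz⟩
    · rintro ⟨x, rfl⟩
      intro t ht
      rcases ht with rfl | rfl
      · exact le_trans (hle_l _ _) (hle_l _ _)
      · exact le_trans (hle_r _ _) (hle_l _ _)
  · ext x
    constructor
    · intro hx; exact key x hx
    · intro hx t ht
      rcases ht with rfl | rfl
      · calc x = _ := hx.symm
          _ ≤ dinf c sup t x := hle_l _ _
          _ ≤ t := hle_l _ _
      · calc x = _ := hx.symm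
          _ ≤ dinf c sup t x := hle_r _ _
          _ ≤ t := hle_l _ _
end

section
/- Let (P,≤,',0,1) be a bounded poset with unary operation ' and let (P,⊔,',0,1) be an algebra assigned to it (x⊔y=y if x≤y; x⊔y=y⊔x ∈ U(x,y)), with x⊓y := (x'⊔y')'. Then P is a generalized orthomodular poset if and only if the algebra satisfies: (i) if (x⊔z)⊔(((x'⊓w)⊓((x⊔y)⊓w))⊔z) = z for all w, then (x⊔y)⊔z = z; (ii) (x⊓y)⊔x = x; (iii) (x⊔y)⊔(x'⊔y) = 1; (iv) x'' = x. -/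
variable {P : Type*}

/-- Characterization of generalized orthomodular posets by identities and an
implication in an assigned algebra. -/
theorem gomp_iff_assigned_algebra_conditions
    [PartialOrder P] [BoundedOrder P] (c : P → P) (sup : P → P → P)
    (hs1 : ∀ x y : P, x ≤ y → sup x y = y)
    (hs2 : ∀ x y : P, sup x y = sup y x)
    (hs3 : ∀ x y : P, sup x y ∈ upperCone {x, y}) :
    ((∀ x : P, c (c x) = x) ∧
     (∀ x y : P, x ≤ y → c y ≤ c x) ∧
     (∀ x : P, lowerCone {x, c x} = {(⊥ : P)}) ∧
     (∀ x : P, upperCone {x, c x} = {(⊤ : P)}) ∧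
     (∀ x y : P, x ≤ y → upperCone {y} = upperCone ({x} ∪ lowerCone {c x, y}))) ↔
    ((∀ x y z : P,
        (∀ w : P, sup (sup x z)
          (sup (dinf c sup (dinf c sup (c x) w) (dinf c sup (sup x y) w)) z) = z) →
        sup (sup x y) z = z) ∧
     (∀ x y : P, sup (dinf c sup x y) x = x) ∧
     (∀ x y : P, sup (sup x y) (sup (c x) y) = (⊤ : P)) ∧
     (∀ x : P, c (c x) = x)) := by
  have lsl : ∀ x y : P, x ≤ sup x y := fun x y => hs3 x y x (by simp)
  have lsr : ∀ x y : P, y ≤ sup x y := fun x y => hs3 x y y (by simp)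
  have sup_self : ∀ x : P, sup x x = x := fun x => hs1 x x le_rfl
  constructor
  · rintro ⟨A1, A2, A3, A4, A5⟩
    have dle : ∀ x y : P, dinf c sup x y ≤ x := by
      intro x y
      have h := A2 _ _ (lsl (c x) (c y))
      rwa [A1] at h
    refine ⟨?_, ?_, ?_, A1⟩
    · -- B1
      intro x y z H
      have hx : x ≤ z := by
        refine le_trans (lsl x z) ?_
        conv_rhs => rw [← H ⊥]
        exact lsl _ _
      have htw : ∀ w : P,
          dinf c sup (dinf c sup (c x) w) (dinf c sup (sup x y) w) ≤ z := by
        intro w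
        have h : sup (dinf c sup (dinf c sup (c x) w) (dinf c sup (sup x y) w))
            z ≤ z := by
          conv_rhs => rw [← H w]
          exact lsr _ _
        exact le_trans (lsl _ _) h
      apply hs1
      have hz : z ∈ upperCone {sup x y} := by
        rw [A5 x (sup x y) (lsl x y)]
        intro a ha
        rcases ha with ha | ha
        · rcases ha with rfl; exact hx
        · have hacx : a ≤ c x := ha (c x) (by simp)
          have hasy : a ≤ sup x y := ha (sup x y) (by simp)
          have e1 : dinf c sup (c x) a = a := by
            have h1 : x ≤ c a := by
              have := A2 a (c x) hacx; rwa [A1] at this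
            unfold dinf
            rw [A1, hs1 x (c a) h1, A1]
          have e2 : dinf c sup (sup x y) a = a := by
            have h1 : c (sup x y) ≤ c a := A2 a _ hasy
            unfold dinf
            rw [hs1 _ _ h1, A1]
          have := htw a
          rw [e1, e2] at this
          unfold dinf at this
          rwa [sup_self, A1] at this
      exact hz (sup x y) (by simp)
    · -- B2
      intro x y
      exact hs1 _ _ (dle x y)
    · -- B3
      intro x y
      have hmem : sup (sup x y) (sup (c x) y) ∈ upperCone {x, c x} := by
        intro a ha
        rcases ha with rfl | ha
        · exact le_trans (lsl a y) (lsl _ _)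
        · rcases ha with rfl
          exact le_trans (lsl (c x) y) (lsr _ _)
      rw [A4 x] at hmem
      exact hmem
  · rintro ⟨B1, B2, B3, B4⟩
    have dle : ∀ x y : P, dinf c sup x y ≤ x := fun x y =>
      le_trans (lsl _ _) (le_of_eq (B2 x y))
    have dcomm : ∀ x y : P, dinf c sup x y = dinf c sup y x := by
      intro x y; unfold dinf; rw [hs2]
    have dler : ∀ x y : P, dinf c sup x y ≤ y := fun x y => by
      rw [dcomm]; exact dle y x
    have A2 : ∀ x y : P, x ≤ y → c y ≤ c x := by
      intro x y h
      have h2 := dle (c x) (c y)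
      unfold dinf at h2
      rwa [B4, B4, hs1 x y h] at h2
    have A4 : ∀ x : P, upperCone {x, c x} = {(⊤ : P)} := by
      intro x
      ext u
      constructor
      · intro hu
        have hx : x ≤ u := hu x (by simp)
        have hcx : c x ≤ u := hu (c x) (by simp)
        have h := B3 x u
        rw [hs1 x u hx, hs1 (c x) u hcx, sup_self] at h
        simpa using h
      · intro hu
        rcases hu with rfl
        intro a _; exact le_top
    have A5 : ∀ x y : P, x ≤ y →
        upperCone {y} = upperCone ({x} ∪ lowerCone {c x, y}) := by
      intro x y hxy
      ext z
      constructor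
      · intro hz
        have hyz : y ≤ z := hz y (by simp)
        intro a ha
        rcases ha with ha | ha
        · rcases ha with rfl; exact le_trans hxy hyz
        · exact le_trans (ha y (by simp)) hyz
      · intro hz
        have hx : x ≤ z := hz x (Or.inl rfl)
        have key := B1 x y z
        have hyp : ∀ w : P, sup (sup x z)
            (sup (dinf c sup (dinf c sup (c x) w) (dinf c sup (sup x y) w)) z)
            = z := by
          intro w
          have htw : dinf c sup (dinf c sup (c x) w) (dinf c sup (sup x y) w)
              ≤ z := by
            refine hz _ (Or.inr ?_)
            intro b hb
            rcases hb with rfl | hb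
            · exact le_trans (dle _ _) (dle _ _)
            · rcases hb with rfl
              exact le_trans (dler _ _) (le_of_le_of_eq (dle _ _) (hs1 x b hxy))
          rw [hs1 x z hx, hs1 _ _ htw, sup_self]
        have := key hyp
        rw [hs1 x y hxy] at this
        intro a ha
        rcases ha with rfl
        exact le_trans (lsl a z) (le_of_eq this)
    have hcbot : c (⊥ : P) = ⊤ := by
      have h5 := A5 ⊥ ⊤ bot_le
      have hmem : c (⊥ : P) ∈ upperCone ({⊥} ∪ lowerCone {c (⊥ : P), ⊤}) := by
        intro a ha
        rcases ha with ha | ha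
        · rcases ha with rfl; exact bot_le
        · exact ha (c ⊥) (by simp)
      rw [← h5] at hmem
      have := hmem ⊤ (by simp)
      exact le_antisymm le_top this
    have hctop : c (⊤ : P) = ⊥ := by
      rw [← hcbot, B4]
    have A3 : ∀ x : P, lowerCone {x, c x} = {(⊥ : P)} := by
      intro x
      ext u
      constructor
      · intro hu
        have h1 : u ≤ x := hu x (by simp)
        have h2 : u ≤ c x := hu (c x) (by simp)
        have hcu : c u ∈ upperCone {x, c x} := by
          intro a ha
          rcases ha with rfl | ha
          · have := A2 u (c a) h2; rwa [B4] at this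
          · rcases ha with rfl
            exact A2 u x h1
        rw [A4 x] at hcu
        have : c u = ⊤ := hcu
        have : u = c ⊤ := by rw [← this, B4]
        simp [this, hctop]
      · intro hu
        rcases hu with rfl
        intro a _
        exact bot_le
    exact ⟨B4, A2, A3, A4, A5⟩
end
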